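/- arXiv:0708.0506 — 3 statements merged into one kernel-verified Lean document; each statement's English description precedes it below -/
import Mathlib

section
/- Let b : [0,1]^k → ℝ have continuous mixed partial b^{(1,…,1)}. With A = {0,1}^k, M_β the averaging operator over coordinates where β_i = 1, and (N b)(x) = ∫₀^{x₁}⋯∫₀^{x_k} b^{(1,…,1)}(u) du, one has ∑_{β ∈ A} (−1)^{|β|} (M_β N b)(x) = ∑_{β ∈ A} (−1)^{|β|} (M_β b)(x) for all x ∈ [0,1]^k. -/
/-!
With `N b (y) = ∫_{[0,y]} ∂₁⋯∂ₖ b`, the fundamental theorem of calculus applied in one coordinate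
at a time (together with Fubini) gives the inclusion–exclusion formula
`N b (y) = ∑_γ (-1)^{|γ|} b (y with yᵢ replaced by 0 wherever γᵢ = 1)`.
Substituting it into the left-hand side, a term with `γ ≠ 0` does not depend on the coordinates `i`
with `γᵢ = 1`, so its alternating sum over `β` cancels in pairs (flip `βᵢ`); the term `γ = 0` is the
right-hand side.
-/

open MeasureTheory Set
open scoped Finset

namespace HallYatchew

section PiFubini

variable {ι : Type*} [Fintype ι] [DecidableEq ι] {α : ι → Type*} [∀ i, MeasurableSpace (α i)]
  {μ : ∀ i, Measure (α i)} [∀ i, IsProbabilityMeasure (μ i)]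

theorem measurePreserving_update_prod (i : ι) :
    MeasurePreserving (fun p : (∀ j, α j) × α i => Function.update p.1 i p.2)
      ((Measure.pi μ).prod (μ i)) (Measure.pi μ) := by
  refine ⟨measurable_update', (Measure.pi_eq fun s hs => ?_).symm⟩
  -- the overwritten coordinate `p.1 i` only contributes the factor `μ i univ = 1`
  have hpre : (fun p : (∀ j, α j) × α i => Function.update p.1 i p.2) ⁻¹' Set.univ.pi s
      = Set.univ.pi (Function.update s i Set.univ) ×ˢ s i := by
    ext ⟨z, t⟩
    simp only [Set.mem_preimage, mem_univ_pi, mem_prod]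
    constructor
    · intro h
      refine ⟨fun j => ?_, by simpa using h i⟩
      rcases eq_or_ne j i with rfl | hj
      · simp
      · simpa [hj] using h j
    · rintro ⟨hz, ht⟩ j
      rcases eq_or_ne j i with rfl | hj
      · simpa using ht
      · simpa [hj] using hz j
  rw [Measure.map_apply measurable_update' (.univ_pi hs), hpre, Measure.prod_prod, Measure.pi_pi,
    Fintype.prod_eq_mul_prod_compl i, Fintype.prod_eq_mul_prod_compl i fun j => μ j (s j),
    Function.update_self, measure_univ, one_mul, mul_comm]
  congr 1
  refine Finset.prod_congr rfl fun j hj => ?_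
  rw [Function.update_of_ne (by simpa using hj)]

theorem integral_eq_integral_integral_update {E : Type*} [NormedAddCommGroup E]
    [NormedSpace ℝ E] (i : ι) {f : (∀ j, α j) → E} (hf : Integrable f (Measure.pi μ)) :
    ∫ x, f x ∂Measure.pi μ = ∫ x, ∫ t, f (Function.update x i t) ∂μ i ∂Measure.pi μ := by
  have hmp := measurePreserving_update_prod (μ := μ) i
  rw [← integral_prod (fun p => f (Function.update p.1 i p.2)) ((hmp.integrable_comp hf.1).2 hf),
    ← integral_map hmp.measurable.aemeasurable (by rw [hmp.map_eq]; exact hf.1), hmp.map_eq]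

end PiFubini

theorem volume_restrict_unitCube {ι : Type*} [Fintype ι] :
    (volume : Measure (ι → ℝ)).restrict (Icc 0 1)
      = Measure.pi fun _ => (volume : Measure ℝ).restrict (Icc 0 1) := by
  rw [← pi_univ_Icc, volume_pi, Measure.restrict_pi_pi]; rfl

theorem setIntegral_Icc_ite_le_mul_eq_sub {a b c : ℝ} {g g' : ℝ → ℝ}
    (hg : ∀ t ∈ Icc a b, HasDerivWithinAt g (g' t) (Icc a b) t)
    (hg' : ContinuousOn g' (Icc a b)) (hc : c ∈ Icc a b) :
    ∫ t in Icc a b, (if t ≤ c then (1:ℝ) else 0) * g' t = g c - g a := by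
  have hac : Icc a c ⊆ Icc a b := Icc_subset_Icc_right hc.2
  simp_rw [ite_mul, one_mul, zero_mul, ← Set.mem_Iic, ← indicator_apply]
  rw [setIntegral_indicator measurableSet_Iic, ← Ici_inter_Iic, inter_assoc, Iic_inter_Iic,
    inf_eq_right.2 hc.2, Ici_inter_Iic,
    integral_Icc_eq_integral_Ioc, ← intervalIntegral.integral_of_le hc.1]
  refine intervalIntegral.integral_eq_sub_of_hasDerivAt_of_le hc.1
    (fun t ht => (hg t (hac ht)).continuousWithinAt.mono hac) (fun t ht => ?_)
    ((hg'.mono hac).intervalIntegrable_of_Icc hc.1)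
  exact (hg t (hac (Ioo_subset_Icc_self ht))).hasDerivAt
    (Icc_mem_nhds ht.1 (ht.2.trans_le hc.2))

theorem integrableOn_prod_ite_le_mul {ι : Type*} {g : (ι → ℝ) → ℝ} {s : Set (ι → ℝ)}
    {μ : Measure (ι → ℝ)} (S : Finset ι) (c : ι → ℝ) (hg : IntegrableOn g s μ) :
    IntegrableOn (fun w => (∏ i ∈ S, if w i ≤ c i then (1:ℝ) else 0) * g w) s μ := by
  refine hg.bdd_mul (c := 1) ?_ (Filter.Eventually.of_forall fun w => ?_)
  · exact (Finset.measurable_prod _ fun i _ => Measurable.ite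
      (measurableSet_le (measurable_pi_apply i) measurable_const)
      measurable_const measurable_const).aestronglyMeasurable
  · rw [norm_prod]
    exact Finset.prod_le_one (fun _ _ => norm_nonneg _) fun i _ => by split_ifs <;> simp

theorem setIntegral_unitCube_eq_setIntegral_update {ι : Type*} [Fintype ι] [DecidableEq ι]
    {E : Type*} [NormedAddCommGroup E] [NormedSpace ℝ E] (i : ι) {f : (ι → ℝ) → E}
    (hf : IntegrableOn f (Icc 0 1)) :
    ∫ w in Icc (0 : ι → ℝ) 1, f w
      = ∫ z in Icc (0 : ι → ℝ) 1, ∫ t in Icc (0 : ℝ) 1, f (Function.update z i t) := by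
  have : IsProbabilityMeasure ((volume : Measure ℝ).restrict (Icc 0 1)) := ⟨by simp⟩
  rw [IntegrableOn, volume_restrict_unitCube] at hf
  rw [volume_restrict_unitCube, integral_eq_integral_integral_update i hf]

theorem ite_mem_Icc_pi {ι α : Type*} [Preorder α] {a b u v : ι → α} (p : ι → Prop)
    [DecidablePred p] (hu : u ∈ Icc a b) (hv : v ∈ Icc a b) :
    (fun i => if p i then u i else v i) ∈ Icc a b :=
  Set.piecewise_mem_Icc' (s := {i | p i}) hu hv

theorem update_mem_Icc_pi {ι α : Type*} [DecidableEq ι] [Preorder α] {a b x : ι → α} {i : ι}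
    {t : α} (hx : x ∈ Icc a b) (ht : t ∈ Icc (a i) (b i)) : Function.update x i t ∈ Icc a b := by
  constructor <;> intro j <;> rcases eq_or_ne j i with rfl | hj
  · simpa using ht.1
  · simpa [hj] using hx.1 j
  · simpa using ht.2
  · simpa [hj] using hx.2 j

section AlternatingSums

open Finset

variable {ι R : Type*} [Fintype ι] [DecidableEq ι] [CommRing R]

theorem sum_powerset_univ_eq_sum_bool {M : Type*} [AddCommMonoid M] (f : Finset ι → M) :
    ∑ s ∈ univ.powerset, f s = ∑ γ : ι → Bool, f (univ.filter fun i => γ i) :=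
  sum_nbij' (fun s i => decide (i ∈ s)) (fun γ => univ.filter fun i => γ i) (by simp) (by simp)
    (fun s _ => by ext; simp) (fun γ _ => by ext; simp) (fun s _ => by congr; ext; simp)

theorem neg_one_pow_card_filter_update_not (β : ι → Bool) (i : ι) :
    (-1 : R) ^ #{j | Function.update β i (!β i) j} = -(-1 : R) ^ #{j | β j} := by
  have hsign : ∀ γ : ι → Bool, (-1 : R) ^ #{j | γ j} = ∏ j, if γ j then -1 else 1 := fun γ => by
    rw [prod_ite, prod_const, prod_const, one_pow, mul_one]
  rw [hsign, hsign, Fintype.prod_eq_mul_prod_compl i, Fintype.prod_eq_mul_prod_compl i,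
    Function.update_self, prod_congr rfl fun j hj => by
      rw [Function.update_of_ne (by simpa using hj)]]
  cases β i <;> simp

theorem sum_neg_one_pow_mul_eq_zero_of_update_not (f : (ι → Bool) → R) (i : ι)
    (hf : ∀ β, f (Function.update β i (!β i)) = f β) :
    ∑ β : ι → Bool, (-1 : R) ^ #{j | β j} * f β = 0 := by
  refine sum_involution (fun β _ => Function.update β i (!β i)) (fun β _ => ?_) (fun β _ _ h => ?_)
    (fun β _ => mem_univ _) (fun β _ => by simp)
  · rw [neg_one_pow_card_filter_update_not, hf]; ring
  · simpa using congrFun h i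

theorem sum_neg_one_pow_mul_sum_neg_one_pow_mul (g : (ι → Bool) → (ι → Bool) → R)
    (hg : ∀ β γ i, γ i → g (Function.update β i (!β i)) γ = g β γ) :
    ∑ β : ι → Bool, (-1 : R) ^ #{j | β j} * ∑ γ : ι → Bool, (-1 : R) ^ #{j | γ j} * g β γ
      = ∑ β : ι → Bool, (-1 : R) ^ #{j | β j} * g β fun _ => false := by
  simp_rw [mul_sum]
  rw [sum_comm, sum_eq_single (fun _ => false)]
  · simp
  · intro γ _ hγ
    obtain ⟨i, hi⟩ : ∃ i, γ i := by
      by_contra! h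
      exact hγ (funext fun i => by simpa using h i)
    simp_rw [mul_left_comm _ ((-1 : R) ^ #{j | γ j}), ← mul_sum,
      sum_neg_one_pow_mul_eq_zero_of_update_not (g · γ) i fun β => hg β γ i hi, mul_zero]
  · simp

theorem notMem_filter_val_lt_self {k : ℕ} (m : Fin k) :
    m ∉ univ.filter fun i : Fin k => (i : ℕ) < m := by
  simp

theorem filter_val_lt_succ {k : ℕ} (m : Fin k) :
    (univ.filter fun i : Fin k => (i : ℕ) < m + 1)
      = insert m (univ.filter fun i : Fin k => (i : ℕ) < m) := by
  ext i
  simp only [Finset.mem_filter, Finset.mem_univ, true_and, Finset.mem_insert, Fin.ext_iff]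
  omega

theorem eq_sum_powerset_of_sub_update {k : ℕ} {G : ℕ → (Fin k → ℝ) → ℝ}
    (hG : ∀ m : Fin k, ∀ y ∈ Icc (0 : Fin k → ℝ) 1,
      G (m + 1) y = G m y - G m (Function.update y m 0)) :
    ∀ j ≤ k, ∀ y ∈ Icc (0 : Fin k → ℝ) 1,
      G j y = ∑ s ∈ (univ.filter fun i : Fin k => (i : ℕ) < j).powerset,
        (-1 : ℝ) ^ #s * G 0 fun i => if i ∈ s then 0 else y i := by
  intro j
  induction j with
  | zero => simp
  | succ j ih =>
    intro hj y hy
    obtain ⟨m, rfl⟩ : ∃ m : Fin k, (m : ℕ) = j := ⟨⟨j, hj⟩, rfl⟩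
    have hy' : Function.update y m 0 ∈ Set.Icc (0 : Fin k → ℝ) 1 :=
      update_mem_Icc_pi hy ⟨le_rfl, zero_le_one⟩
    rw [hG m y hy, ih m.isLt.le y hy, ih m.isLt.le _ hy', filter_val_lt_succ,
      sum_powerset_insert (notMem_filter_val_lt_self m), sub_eq_add_neg, ← sum_neg_distrib]
    congr 1
    refine sum_congr rfl fun s hs => ?_
    have hms : m ∉ s := fun h => notMem_filter_val_lt_self m (mem_powerset.1 hs h)
    have hzero_insert : (fun i => if i ∈ insert m s then 0 else y i)
        = fun i => if i ∈ s then 0 else Function.update y m 0 i := by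
      ext i
      rcases eq_or_ne i m with rfl | hi
      · simp [hms]
      · simp [hi]
    rw [card_insert_of_notMem hms, pow_succ, hzero_insert]
    ring

end AlternatingSums

section IteratedPrimitive

variable {k : ℕ}

def mixFirst (j : ℕ) (w y : Fin k → ℝ) : Fin k → ℝ := fun i => if (i : ℕ) < j then w i else y i

theorem mixFirst_mem_Icc {j : ℕ} {a b w y : Fin k → ℝ} (hw : w ∈ Icc a b) (hy : y ∈ Icc a b) :
    mixFirst j w y ∈ Icc a b :=
  ite_mem_Icc_pi _ hw hy

theorem continuous_mixFirst (j : ℕ) (y : Fin k → ℝ) : Continuous fun w => mixFirst j w y :=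
  continuous_pi fun i => by unfold mixFirst; split_ifs <;> fun_prop

theorem mixFirst_zero (w y : Fin k → ℝ) : mixFirst 0 w y = y := rfl

theorem mixFirst_of_le {j : ℕ} (h : k ≤ j) (w y : Fin k → ℝ) : mixFirst j w y = w :=
  funext fun i => if_pos (i.isLt.trans_le h)

theorem mixFirst_update_right {j : ℕ} {m : Fin k} (hm : j ≤ m) (w y : Fin k → ℝ) (v : ℝ) :
    mixFirst j w (Function.update y m v) = Function.update (mixFirst j w y) m v := by
  funext i
  rcases eq_or_ne i m with rfl | hi
  · simp [mixFirst, hm]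
  · simp [mixFirst, Function.update_of_ne hi]

theorem mixFirst_succ_update (m : Fin k) (w y : Fin k → ℝ) (t : ℝ) :
    mixFirst (m + 1) (Function.update w m t) y = Function.update (mixFirst m w y) m t := by
  funext i
  rcases eq_or_ne i m with rfl | hi
  · simp [mixFirst]
  · have : (i : ℕ) < m + 1 ↔ (i : ℕ) < m := by
      have : (i : ℕ) ≠ m := fun h => hi (Fin.ext h)
      omega
    simp only [mixFirst, Function.update_of_ne hi, this]

theorem integrableOn_prod_ite_le_mul_comp_mixFirst {f : (Fin k → ℝ) → ℝ}
    (hf : ContinuousOn f (Icc 0 1)) {y : Fin k → ℝ} (hy : y ∈ Icc 0 1) (S : Finset (Fin k))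
    (c : Fin k → ℝ) (j : ℕ) :
    IntegrableOn (fun w => (∏ i ∈ S, if w i ≤ c i then (1:ℝ) else 0) * f (mixFirst j w y))
      (Icc 0 1) :=
  integrableOn_prod_ite_le_mul S c <| (hf.comp (continuous_mixFirst j y).continuousOn
    fun _ hw => mixFirst_mem_Icc hw hy).integrableOn_compact isCompact_Icc

/-- `∫₀^{y₀} ⋯ ∫₀^{y_{j-1}} D j (w₀, …, w_{j-1}, y_j, …, y_{k-1}) dw`, written as an integral
over the unit cube against indicators. -/
noncomputable def iteratedPrimitive (D : ℕ → (Fin k → ℝ) → ℝ) (j : ℕ) (y : Fin k → ℝ) : ℝ :=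
  ∫ w in Icc 0 1, (∏ i ∈ Finset.univ.filter fun i : Fin k => (i : ℕ) < j,
    if w i ≤ y i then (1:ℝ) else 0) * D j (mixFirst j w y)

theorem iteratedPrimitive_zero (D : ℕ → (Fin k → ℝ) → ℝ) (y : Fin k → ℝ) :
    iteratedPrimitive D 0 y = D 0 y := by
  simp [iteratedPrimitive, mixFirst_zero, Measure.real, ← pi_univ_Icc, volume_pi_pi]

variable {D : ℕ → (Fin k → ℝ) → ℝ}

theorem setIntegral_ite_le_mul_update_eq_sub
    (hderiv : ∀ j : Fin k, ∀ x ∈ Icc (0 : Fin k → ℝ) 1,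
      HasDerivWithinAt (fun t => D (j : ℕ) (Function.update x j t))
        (D ((j : ℕ) + 1) x) (Icc 0 1) (x j))
    {m : Fin k} (hcont : ContinuousOn (D ((m : ℕ) + 1)) (Icc 0 1)) {x : Fin k → ℝ}
    (hx : x ∈ Icc 0 1) {c : ℝ} (hc : c ∈ Icc (0 : ℝ) 1) :
    ∫ t in Icc (0 : ℝ) 1, (if t ≤ c then (1:ℝ) else 0) * D (m + 1) (Function.update x m t)
      = D m (Function.update x m c) - D m (Function.update x m 0) := by
  have hupd : ∀ t ∈ Icc (0 : ℝ) 1, Function.update x m t ∈ Icc 0 1 :=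
    fun t ht => update_mem_Icc_pi hx ht
  refine setIntegral_Icc_ite_le_mul_eq_sub (g := fun t => D m (Function.update x m t))
    (g' := fun t => D (m + 1) (Function.update x m t)) (fun t ht => ?_)
    (hcont.comp (by fun_prop : Continuous (Function.update x m)).continuousOn hupd) hc
  simpa using hderiv m _ (hupd t ht)

theorem iteratedPrimitive_succ
    (hderiv : ∀ j : Fin k, ∀ x ∈ Icc (0 : Fin k → ℝ) 1,
      HasDerivWithinAt (fun t => D (j : ℕ) (Function.update x j t))
        (D ((j : ℕ) + 1) x) (Icc 0 1) (x j))
    (hcont : ∀ j : ℕ, j ≤ k → ContinuousOn (D j) (Icc (0 : Fin k → ℝ) 1))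
    (m : Fin k) {y : Fin k → ℝ} (hy : y ∈ Icc 0 1) :
    iteratedPrimitive D (m + 1) y
      = iteratedPrimitive D m y - iteratedPrimitive D m (Function.update y m 0) := by
  set S := Finset.univ.filter fun i : Fin k => (i : ℕ) < m
  have hmS : m ∉ S := notMem_filter_val_lt_self m
  have hupd_left : ∀ (c w : Fin k → ℝ) (t : ℝ),
      (∏ i ∈ S, if Function.update w m t i ≤ c i then (1:ℝ) else 0)
        = ∏ i ∈ S, if w i ≤ c i then (1:ℝ) else 0 := fun c w t =>
    Finset.prod_congr rfl fun i hi => by rw [Function.update_of_ne (ne_of_mem_of_not_mem hi hmS)]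
  have hupd_right : ∀ (c w : Fin k → ℝ) (t : ℝ),
      (∏ i ∈ S, if w i ≤ Function.update c m t i then (1:ℝ) else 0)
        = ∏ i ∈ S, if w i ≤ c i then (1:ℝ) else 0 := fun c w t =>
    Finset.prod_congr rfl fun i hi => by rw [Function.update_of_ne (ne_of_mem_of_not_mem hi hmS)]
  have hinner : ∀ z ∈ Icc (0 : Fin k → ℝ) 1,
      ∫ t in Icc (0 : ℝ) 1, (∏ i ∈ insert m S,
          if Function.update z m t i ≤ y i then (1:ℝ) else 0)
          * D (m + 1) (mixFirst (m + 1) (Function.update z m t) y)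
        = (∏ i ∈ S, if z i ≤ y i then (1:ℝ) else 0) * D m (mixFirst m z y)
          - (∏ i ∈ S, if z i ≤ Function.update y m 0 i then (1:ℝ) else 0)
            * D m (mixFirst m z (Function.update y m 0)) := by
    intro z hz
    have hq : Function.update (mixFirst m z y) m (y m) = mixFirst m z y := by
      rw [← mixFirst_update_right le_rfl, Function.update_eq_self]
    simp_rw [Finset.prod_insert hmS, Function.update_self, mixFirst_succ_update, hupd_left,
      hupd_right, mul_comm (ite _ _ _), mul_assoc, integral_const_mul, ← mul_sub]
    rw [setIntegral_ite_le_mul_update_eq_sub hderiv (hcont _ m.isLt) (mixFirst_mem_Icc hz hy)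
      ⟨hy.1 m, hy.2 m⟩, hq, mixFirst_update_right le_rfl]
  have hy' : Function.update y m 0 ∈ Icc 0 1 := update_mem_Icc_pi hy ⟨le_rfl, zero_le_one⟩
  unfold iteratedPrimitive
  rw [filter_val_lt_succ, setIntegral_unitCube_eq_setIntegral_update m
      (integrableOn_prod_ite_le_mul_comp_mixFirst (hcont _ m.isLt) hy _ _ _),
    setIntegral_congr_fun measurableSet_Icc hinner,
    integral_sub (integrableOn_prod_ite_le_mul_comp_mixFirst (hcont _ m.isLt.le) hy _ _ _)
      (integrableOn_prod_ite_le_mul_comp_mixFirst (hcont _ m.isLt.le) hy' _ _ _)]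

theorem setIntegral_prod_ite_le_mul_eq_sum {b : (Fin k → ℝ) → ℝ} (hD0 : D 0 = b)
    (hderiv : ∀ j : Fin k, ∀ x ∈ Icc (0 : Fin k → ℝ) 1,
      HasDerivWithinAt (fun t => D (j : ℕ) (Function.update x j t))
        (D ((j : ℕ) + 1) x) (Icc 0 1) (x j))
    (hcont : ∀ j : ℕ, j ≤ k → ContinuousOn (D j) (Icc (0 : Fin k → ℝ) 1))
    {y : Fin k → ℝ} (hy : y ∈ Icc 0 1) :
    ∫ w in Icc (0 : Fin k → ℝ) 1, (∏ i : Fin k, if w i ≤ y i then (1:ℝ) else 0) * D k w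
      = ∑ γ : Fin k → Bool, (-1 : ℝ) ^ #{i | γ i} * b fun i => if γ i then 0 else y i := by
  have h := eq_sum_powerset_of_sub_update
    (fun m y hy => iteratedPrimitive_succ hderiv hcont m hy) k le_rfl y hy
  have hS : (Finset.univ.filter fun i : Fin k => (i : ℕ) < k) = Finset.univ :=
    Finset.filter_true_of_mem fun i _ => i.isLt
  rw [iteratedPrimitive, hS] at h
  simp_rw [mixFirst_of_le le_rfl, iteratedPrimitive_zero, hD0, sum_powerset_univ_eq_sum_bool] at h
  simpa using h

end IteratedPrimitive

end HallYatchew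

open HallYatchew in
/-- Here `D j` is the mixed partial of `b` in the first `j` coordinates (so `D k = b^{(1,…,1)}`),
`(N b)(y) = ∫₀^{y₁}⋯∫₀^{y_k} b^{(1,…,1)}(w) dw` is written as a cube integral against indicators,
and `M_β` is realized as integration over the unit cube in the coordinates with `β_i = 1`. -/
theorem identity_A2 (k : ℕ)
    (b : (Fin k → ℝ) → ℝ) (D : ℕ → (Fin k → ℝ) → ℝ) (hD0 : D 0 = b)
    (hderiv : ∀ j : Fin k, ∀ x ∈ Icc (0 : Fin k → ℝ) 1,
      HasDerivWithinAt (fun t => D (j : ℕ) (Function.update x j t))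
        (D ((j : ℕ) + 1) x) (Icc 0 1) (x j))
    (hcont : ∀ j : ℕ, j ≤ k → ContinuousOn (D j) (Icc (0 : Fin k → ℝ) 1))
    (x : Fin k → ℝ) (hx : x ∈ Icc (0 : Fin k → ℝ) 1) :
    ∑ β : Fin k → Bool,
      (-1 : ℝ) ^ (Finset.univ.filter fun i => β i = true).card *
        ∫ u in Icc (0 : Fin k → ℝ) 1,
          (∫ w in Icc (0 : Fin k → ℝ) 1,
            (∏ i : Fin k,
              if w i ≤ (if β i then u i else x i) then (1:ℝ) else 0) * D k w)
      = ∑ β : Fin k → Bool,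
          (-1 : ℝ) ^ (Finset.univ.filter fun i => β i = true).card *
            ∫ u in Icc (0 : Fin k → ℝ) 1,
              b (fun i => if β i then u i else x i) := by
  have hb : ContinuousOn b (Icc 0 1) := hD0 ▸ hcont 0 k.zero_le
  have hmem : ∀ β γ : Fin k → Bool, ∀ u ∈ Icc (0 : Fin k → ℝ) 1,
      (fun i => if γ i then 0 else if β i then u i else x i) ∈ Icc (0 : Fin k → ℝ) 1 :=
    fun β γ u hu => ite_mem_Icc_pi _ (left_mem_Icc.2 zero_le_one) (ite_mem_Icc_pi _ hu hx)
  have hint : ∀ β γ : Fin k → Bool, IntegrableOn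
      (fun u => b fun i => if γ i then 0 else if β i then u i else x i) (Icc (0 : Fin k → ℝ) 1) :=
    fun β γ => (hb.comp (continuous_pi fun i => by split_ifs <;> fun_prop).continuousOn
      (hmem β γ)).integrableOn_compact isCompact_Icc
  calc
    _ = ∑ β : Fin k → Bool, (-1 : ℝ) ^ #{i | β i} * ∑ γ : Fin k → Bool, (-1 : ℝ) ^ #{i | γ i} *
        ∫ u in Icc (0 : Fin k → ℝ) 1, b fun i => if γ i then 0 else if β i then u i else x i := by
      refine Finset.sum_congr rfl fun β _ => ?_
      rw [setIntegral_congr_fun measurableSet_Icc fun u hu =>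
          setIntegral_prod_ite_le_mul_eq_sum hD0 hderiv hcont (ite_mem_Icc_pi _ hu hx),
        integral_finsetSum _ fun γ _ => (hint β γ).const_mul _]
      simp_rw [integral_const_mul]
    _ = _ := by
      refine (sum_neg_one_pow_mul_sum_neg_one_pow_mul _ fun β γ i hi => ?_).trans (by simp)
      congr 2 with u
      congr 1 with j
      rcases eq_or_ne j i with rfl | hj
      · simp [hi]
      · rw [Function.update_of_ne hj]
end

section
/- Let g : [0,1]^k → ℝ have continuous mixed partial g^{(1,…,1)}. Then g(x) = ∑_{β ∈ {0,1}^k} (−1)^{|β|} (M_β N g)(x) − ∑_{β ∈ {0,1}^k, β ≠ 0} (−1)^{|β|} (M_β g)(x) for all x ∈ [0,1]^k, where (N g)(x) = ∫₀^{x₁}⋯∫₀^{x_k} g^{(1,…,1)}(u) du and M_β averages over coordinates i with β_i = 1. -/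
/-!
For `y` in the unit cube, integrating `g^{(1,…,1)}` over the box `[0, y]` one coordinate at a
time (the fundamental theorem of calculus in each coordinate) gives the inclusion–exclusion formula
`(N g)(y) = ∑_α (-1)^|α| g(y with the coordinates in α set to 0)`. Hence
`∑_β (-1)^|β| M_β N g = ∑_α (-1)^|α| ∑_β (-1)^|β| M_β g_α`, where `g_α` sets the coordinates
in `α` to `0` before applying `g`. For `α ≠ ∅` the function `g_α` ignores some coordinate
`i ∈ α`, so `M_β g_α` does not change when `i` is added to `β` and the alternating sum over `β`
cancels in pairs. Only `∑_β (-1)^|β| M_β g` survives, and its `β = ∅` term is `g`.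
-/

open MeasureTheory Set

theorem volume_restrict_Icc_zero_one_eq_pi {ι : Type*} [Fintype ι] :
    volume.restrict (Icc (0 : ι → ℝ) 1) = Measure.pi fun _ => volume.restrict (Icc 0 1) := by
  rw [← pi_univ_Icc, volume_pi, Measure.restrict_pi_pi]
  rfl

instance : IsProbabilityMeasure (volume.restrict (Icc (0 : ℝ) 1)) :=
  ⟨by simp⟩

theorem integral_pi_eq_integral_integral_update {α E : Type*} [MeasurableSpace α]
    [NormedAddCommGroup E] [NormedSpace ℝ E] {μ : Measure α} [IsProbabilityMeasure μ] {k : ℕ}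
    (j : Fin k) {f : (Fin k → α) → E} (hf : Integrable f (Measure.pi fun _ => μ)) :
    ∫ w, f w ∂Measure.pi (fun _ => μ) =
      ∫ w, ∫ t, f (Function.update w j t) ∂μ ∂Measure.pi (fun _ => μ) := by
  obtain ⟨n, rfl⟩ : ∃ n, k = n + 1 := ⟨k - 1, by have := j.pos; omega⟩
  have e := measurePreserving_piFinSuccAbove (fun _ : Fin (n + 1) => μ) j
  have hf' : Integrable (fun z : α × (Fin n → α) => f (j.insertNth z.1 z.2))
      (μ.prod (Measure.pi fun _ => μ)) :=
    (e.symm.integrable_comp_emb (MeasurableEquiv.measurableEmbedding _)).2 hf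
  calc ∫ w, f w ∂Measure.pi (fun _ => μ)
      = ∫ z : α × (Fin n → α), f (j.insertNth z.1 z.2) ∂(μ.prod (Measure.pi fun _ => μ)) :=
        (e.symm.integral_comp' f).symm
    _ = ∫ v, ∫ t, f (j.insertNth t v) ∂μ ∂(Measure.pi fun _ => μ) := integral_prod_symm _ hf'
    _ = ∫ z : α × (Fin n → α), ∫ t, f (j.insertNth t z.2) ∂μ
          ∂(μ.prod (Measure.pi fun _ => μ)) := by
        rw [integral_fun_snd (fun v => ∫ t, f (j.insertNth t v) ∂μ)]
        simp
    _ = ∫ w, ∫ t, f (Function.update w j t) ∂μ ∂Measure.pi (fun _ => μ) := by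
        rw [← e.integral_comp']
        congr 1 with w
        congr 1 with t
        exact congrArg f (Fin.insertNth_removeNth j t w)

theorem integral_Icc_ite_le_mul_eq_sub {φ φ' : ℝ → ℝ} {a b y : ℝ} (hy : y ∈ Icc a b)
    (hφ : ∀ t ∈ Icc a b, HasDerivWithinAt φ (φ' t) (Icc a b) t)
    (hφ' : ContinuousOn φ' (Icc a b)) :
    ∫ t in Icc a b, (if t ≤ y then (1 : ℝ) else 0) * φ' t = φ y - φ a := by
  have hsub : Icc a y ⊆ Icc a b := Icc_subset_Icc le_rfl hy.2
  calc ∫ t in Icc a b, (if t ≤ y then (1 : ℝ) else 0) * φ' t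
      = ∫ t in Icc a b, (Iic y).indicator φ' t := by
        congr 1 with t
        by_cases ht : t ≤ y <;> simp [ht]
    _ = ∫ t in a..y, φ' t := by
        rw [integral_Icc_eq_integral_Ioc, setIntegral_indicator measurableSet_Iic, Ioc_inter_Iic,
          inf_eq_right.2 hy.2, intervalIntegral.integral_of_le hy.1]
    _ = φ y - φ a := intervalIntegral.integral_eq_sub_of_hasDerivAt_of_le hy.1
          (fun t ht => (hφ t (hsub ht)).continuousWithinAt.mono hsub)
          (fun t ht => (hφ t (hsub (Ioo_subset_Icc_self ht))).hasDerivAt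
            (Icc_mem_nhds ht.1 (ht.2.trans_le hy.2)))
          ((hφ'.mono hsub).intervalIntegrable_of_Icc hy.1)

theorem sum_powerset_neg_one_pow_card_mul_eq_zero {ι R : Type*} [DecidableEq ι] [CommRing R]
    {s : Finset ι} {i : ι} (hi : i ∈ s) {F : Finset ι → R}
    (hF : ∀ t ⊆ s.erase i, F (insert i t) = F t) :
    ∑ t ∈ s.powerset, (-1) ^ t.card * F t = 0 := by
  rw [← Finset.insert_erase hi, Finset.sum_powerset_insert (Finset.notMem_erase i s),
    ← Finset.sum_add_distrib]
  refine Finset.sum_eq_zero fun t ht => ?_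
  have hit : i ∉ t := fun h => Finset.notMem_erase i s (Finset.mem_powerset.1 ht h)
  rw [hF t (Finset.mem_powerset.1 ht), Finset.card_insert_of_notMem hit, pow_succ]
  ring

theorem sum_boolFun_eq_sum_finset {ι M : Type*} [Fintype ι] [DecidableEq ι] [AddCommMonoid M]
    (f : Finset ι → M) :
    ∑ β : ι → Bool, f (Finset.univ.filter fun i => β i = true) = ∑ s : Finset ι, f s :=
  Fintype.sum_equiv
    ⟨fun β => Finset.univ.filter fun i => β i = true, fun s i => decide (i ∈ s),
      fun β => by ext; simp, fun s => by ext; simp⟩ _ _ fun _ => rfl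

theorem piecewise_filter_eq_true {ι α : Type*} [Fintype ι] [DecidableEq ι] (β : ι → Bool)
    (u x : ι → α) :
    (Finset.univ.filter fun i => β i = true).piecewise u x = fun i => if β i then u i else x i := by
  ext i
  simp [Finset.piecewise]

theorem update_mem_Icc {ι : Type*} [DecidableEq ι] {α : ι → Type*} [∀ i, Preorder (α i)]
    {a b z : ∀ i, α i} {i : ι} {t : α i} (hz : z ∈ Icc a b) (ht : t ∈ Icc (a i) (b i)) :
    Function.update z i t ∈ Icc a b :=
  ⟨le_update_iff.2 ⟨ht.1, fun j _ => hz.1 j⟩, update_le_iff.2 ⟨ht.2, fun j _ => hz.2 j⟩⟩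

theorem continuous_finset_piecewise {ι Y : Type*} {X : ι → Type*} [∀ i, TopologicalSpace (X i)]
    [TopologicalSpace Y] (s : Finset ι) [∀ i, Decidable (i ∈ s)] {f g : Y → ∀ i, X i}
    (hf : Continuous f) (hg : Continuous g) : Continuous fun y => s.piecewise (f y) (g y) :=
  continuous_pi fun i => by
    by_cases hi : i ∈ s
    · simp only [Finset.piecewise_eq_of_mem _ _ _ hi]
      exact (continuous_apply i).comp hf
    · simp only [Finset.piecewise_eq_of_notMem _ _ _ hi]
      exact (continuous_apply i).comp hg

section Piecewise

variable {ι : Type*} {a b : ι → ℝ} {h : (ι → ℝ) → ℝ} (s : Finset ι)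
  [∀ i, Decidable (i ∈ s)]

theorem continuousOn_comp_piecewise_left (hh : ContinuousOn h (Icc a b)) {x : ι → ℝ}
    (hx : x ∈ Icc a b) : ContinuousOn (fun u => h (s.piecewise u x)) (Icc a b) :=
  hh.comp (continuous_finset_piecewise s continuous_id continuous_const).continuousOn
    fun _ hu => s.piecewise_mem_Icc_of_mem_of_mem hu hx

theorem continuousOn_comp_piecewise_right (hh : ContinuousOn h (Icc a b)) {u : ι → ℝ}
    (hu : u ∈ Icc a b) : ContinuousOn (fun x => h (s.piecewise u x)) (Icc a b) :=
  hh.comp (continuous_finset_piecewise s continuous_const continuous_id).continuousOn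
    fun _ hx => s.piecewise_mem_Icc_of_mem_of_mem hu hx

end Piecewise

noncomputable def alternatingCornerSum {ι : Type*} [DecidableEq ι] (g : (ι → ℝ) → ℝ)
    (s : Finset ι) (y : ι → ℝ) : ℝ :=
  ∑ a ∈ s.powerset, (-1) ^ a.card * g (a.piecewise 0 y)

theorem alternatingCornerSum_empty {ι : Type*} [DecidableEq ι] (g : (ι → ℝ) → ℝ) (y : ι → ℝ) :
    alternatingCornerSum g ∅ y = g y := by
  simp [alternatingCornerSum]

theorem alternatingCornerSum_insert {ι : Type*} [DecidableEq ι] (g : (ι → ℝ) → ℝ)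
    {s : Finset ι} {J : ι} (hJ : J ∉ s) (y : ι → ℝ) :
    alternatingCornerSum g (insert J s) y =
      alternatingCornerSum g s y - alternatingCornerSum g s (Function.update y J 0) := by
  rw [alternatingCornerSum, Finset.sum_powerset_insert hJ, alternatingCornerSum,
    alternatingCornerSum, sub_eq_add_neg, ← Finset.sum_neg_distrib]
  congr 1
  refine Finset.sum_congr rfl fun a ha => ?_
  have hJa : J ∉ a := fun h => hJ (Finset.mem_powerset.1 ha h)
  rw [Finset.card_insert_of_notMem hJa, Finset.piecewise_insert, Pi.zero_apply,
    Finset.update_piecewise_of_notMem (hi := hJa), pow_succ]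
  ring

theorem Fin.filter_val_lt_succ {k j : ℕ} (hj : j < k) :
    (Finset.univ.filter fun i : Fin k => (i : ℕ) < j + 1) =
      insert ⟨j, hj⟩ (Finset.univ.filter fun i : Fin k => (i : ℕ) < j) := by
  ext i
  simp [Fin.ext_iff]
  omega

section Corner

variable {k : ℕ}

noncomputable def cornerIntegrand (F : (Fin k → ℝ) → ℝ) (s : Finset (Fin k)) (y w : Fin k → ℝ) :
    ℝ :=
  (∏ i ∈ s, if w i ≤ y i then (1 : ℝ) else 0) * F (s.piecewise w y)

/-- `∫_0^{y_i}, i ∈ s` of `F`, the coordinates outside `s` being frozen at `y`; the paper's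
`N g` is `cornerIntegral g^{(1,…,1)} univ`. -/
noncomputable def cornerIntegral (F : (Fin k → ℝ) → ℝ) (s : Finset (Fin k)) (y : Fin k → ℝ) :
    ℝ :=
  ∫ w in Icc 0 1, cornerIntegrand F s y w

theorem cornerIntegral_empty (F : (Fin k → ℝ) → ℝ) (y : Fin k → ℝ) :
    cornerIntegral F ∅ y = F y := by
  simp [cornerIntegral, cornerIntegrand, measureReal_def, Real.volume_Icc_pi]

theorem integrableOn_cornerIntegrand {F : (Fin k → ℝ) → ℝ} (hF : ContinuousOn F (Icc 0 1))
    (s : Finset (Fin k)) {y : Fin k → ℝ} (hy : y ∈ Icc 0 1) :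
    IntegrableOn (cornerIntegrand F s y) (Icc 0 1) := by
  refine ((continuousOn_comp_piecewise_left s hF hy).integrableOn_compact isCompact_Icc).bdd_mul
    (c := 1) ?_ (ae_of_all _ fun w => ?_)
  · refine (Finset.measurable_prod s fun i _ => ?_).aestronglyMeasurable
    exact Measurable.ite (measurableSet_le (measurable_pi_apply i) measurable_const)
      measurable_const measurable_const
  · rw [norm_prod]
    exact Finset.prod_le_one (fun _ _ => norm_nonneg _) fun i _ => by split_ifs <;> simp

theorem cornerIntegrand_insert_update (F : (Fin k → ℝ) → ℝ) {s : Finset (Fin k)} {J : Fin k}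
    (hJ : J ∉ s) (y w : Fin k → ℝ) (t : ℝ) :
    cornerIntegrand F (insert J s) y (Function.update w J t) =
      (∏ i ∈ s, if w i ≤ y i then (1 : ℝ) else 0) *
        ((if t ≤ y J then (1 : ℝ) else 0) * F (Function.update (s.piecewise w y) J t)) := by
  have hne : ∀ i ∈ s, i ≠ J := fun i hi => ne_of_mem_of_not_mem hi hJ
  have hprod : ∏ i ∈ s, (if Function.update w J t i ≤ y i then (1 : ℝ) else 0) =
      ∏ i ∈ s, if w i ≤ y i then (1 : ℝ) else 0 :=
    Finset.prod_congr rfl fun i hi => by rw [Function.update_of_ne (hne i hi)]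
  have hpiece : (insert J s).piecewise (Function.update w J t) y =
      Function.update (s.piecewise w y) J t := by
    rw [Finset.piecewise_insert, Function.update_self,
      s.piecewise_congr (fun i hi => Function.update_of_ne (hne i hi) t w) fun _ _ => rfl]
  rw [cornerIntegrand, Finset.prod_insert hJ, hprod, hpiece, Function.update_self]
  ring

/-- Fubini isolates the coordinate `J`, then the fundamental theorem of calculus applies in it. -/
theorem cornerIntegral_insert {F G : (Fin k → ℝ) → ℝ} {s : Finset (Fin k)} {J : Fin k}
    (hJ : J ∉ s) (hF : ContinuousOn F (Icc 0 1)) (hG : ContinuousOn G (Icc 0 1))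
    (hGF : ∀ z ∈ Icc (0 : Fin k → ℝ) 1,
      HasDerivWithinAt (fun t => G (Function.update z J t)) (F z) (Icc 0 1) (z J))
    {y : Fin k → ℝ} (hy : y ∈ Icc 0 1) :
    cornerIntegral F (insert J s) y =
      cornerIntegral G s y - cornerIntegral G s (Function.update y J 0) := by
  have hy0 : Function.update y J 0 ∈ Icc (0 : Fin k → ℝ) 1 :=
    update_mem_Icc (t := 0) hy ⟨le_rfl, zero_le_one⟩
  have hslice : ∀ w ∈ Icc (0 : Fin k → ℝ) 1,
      ∫ t in Icc (0 : ℝ) 1, cornerIntegrand F (insert J s) y (Function.update w J t) =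
        cornerIntegrand G s y w - cornerIntegrand G s (Function.update y J 0) w := by
    intro w hw
    have hz : s.piecewise w y ∈ Icc 0 1 := s.piecewise_mem_Icc_of_mem_of_mem hw hy
    simp_rw [cornerIntegrand_insert_update F hJ, integral_const_mul]
    rw [integral_Icc_ite_le_mul_eq_sub (a := 0) (b := 1)
      (φ := fun t => G (Function.update (s.piecewise w y) J t))
      (φ' := fun t => F (Function.update (s.piecewise w y) J t)) ⟨hy.1 J, hy.2 J⟩
      (fun t ht => by simpa using hGF _ (update_mem_Icc (i := J) hz ht))
      (hF.comp (by fun_prop) fun t ht => update_mem_Icc (i := J) hz ht)]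
    have hzJ : s.piecewise w y J = y J := s.piecewise_eq_of_notMem _ _ hJ
    have hprod : ∏ i ∈ s, (if w i ≤ Function.update y J 0 i then (1 : ℝ) else 0) =
        ∏ i ∈ s, if w i ≤ y i then (1 : ℝ) else 0 :=
      Finset.prod_congr rfl fun i hi => by
        rw [Function.update_of_ne (ne_of_mem_of_not_mem hi hJ)]
    rw [cornerIntegrand, cornerIntegrand, hprod, ← hzJ, Function.update_eq_self,
      Finset.update_piecewise_of_notMem (hi := hJ), mul_sub]
  have hint := integrableOn_cornerIntegrand hF (insert J s) hy
  rw [IntegrableOn, volume_restrict_Icc_zero_one_eq_pi] at hint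
  rw [cornerIntegral, volume_restrict_Icc_zero_one_eq_pi,
    integral_pi_eq_integral_integral_update J hint, ← volume_restrict_Icc_zero_one_eq_pi,
    setIntegral_congr_fun measurableSet_Icc hslice,
    integral_sub (integrableOn_cornerIntegrand hG s hy) (integrableOn_cornerIntegrand hG s hy0)]
  rfl

theorem cornerIntegral_eq_alternatingCornerSum {g : (Fin k → ℝ) → ℝ}
    {D : ℕ → (Fin k → ℝ) → ℝ} (hD0 : D 0 = g)
    (hderiv : ∀ j : Fin k, ∀ x ∈ Icc (0 : Fin k → ℝ) 1,
      HasDerivWithinAt (fun t => D (j : ℕ) (Function.update x j t))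
        (D ((j : ℕ) + 1) x) (Icc 0 1) (x j))
    (hcont : ∀ j : ℕ, j ≤ k → ContinuousOn (D j) (Icc (0 : Fin k → ℝ) 1))
    {j : ℕ} (hj : j ≤ k) {y : Fin k → ℝ} (hy : y ∈ Icc 0 1) :
    cornerIntegral (D j) (Finset.univ.filter fun i : Fin k => (i : ℕ) < j) y =
      alternatingCornerSum g (Finset.univ.filter fun i : Fin k => (i : ℕ) < j) y := by
  induction j generalizing y with
  | zero => simp [cornerIntegral_empty, alternatingCornerSum_empty, hD0]
  | succ j ih =>
    have hjk : j < k := hj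
    have hJ : (⟨j, hjk⟩ : Fin k) ∉ Finset.univ.filter fun i : Fin k => (i : ℕ) < j := by simp
    rw [Fin.filter_val_lt_succ hjk, cornerIntegral_insert hJ (hcont _ hj) (hcont j hjk.le)
      (hderiv ⟨j, hjk⟩) hy, alternatingCornerSum_insert g hJ, ih hjk.le hy,
      ih hjk.le (update_mem_Icc (i := ⟨j, hjk⟩) (t := 0) hy ⟨le_rfl, zero_le_one⟩)]

end Corner

section Average

variable {k : ℕ}

/-- The paper's `M_β h` for `β` the indicator of `s`. -/
noncomputable def partialAverage (s : Finset (Fin k)) (h : (Fin k → ℝ) → ℝ) (x : Fin k → ℝ) :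
    ℝ :=
  ∫ u in Icc 0 1, h (s.piecewise u x)

theorem partialAverage_congr {s : Finset (Fin k)} {h₁ h₂ : (Fin k → ℝ) → ℝ}
    (h : EqOn h₁ h₂ (Icc 0 1)) {x : Fin k → ℝ} (hx : x ∈ Icc 0 1) :
    partialAverage s h₁ x = partialAverage s h₂ x :=
  setIntegral_congr_fun measurableSet_Icc fun _ hu => h (s.piecewise_mem_Icc_of_mem_of_mem hu hx)

theorem partialAverage_insert_of_update_eq {h : (Fin k → ℝ) → ℝ} {i : Fin k}
    (hh : ∀ z t, h (Function.update z i t) = h z) (s : Finset (Fin k)) (x : Fin k → ℝ) :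
    partialAverage (insert i s) h x = partialAverage s h x := by
  simp only [partialAverage, Finset.piecewise_insert, hh]

theorem sum_partialAverage_alternatingCornerSum {g : (Fin k → ℝ) → ℝ}
    (hg : ContinuousOn g (Icc 0 1)) {x : Fin k → ℝ} (hx : x ∈ Icc 0 1) :
    ∑ b : Finset (Fin k), (-1) ^ b.card * partialAverage b (alternatingCornerSum g .univ) x =
      ∑ b : Finset (Fin k), (-1) ^ b.card * partialAverage b g x := by
  have hcorner : ∀ a : Finset (Fin k), ContinuousOn (fun z => g (a.piecewise 0 z)) (Icc 0 1) :=
    fun a => continuousOn_comp_piecewise_right a hg ⟨le_rfl, zero_le_one⟩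
  have hexpand : ∀ b : Finset (Fin k), partialAverage b (alternatingCornerSum g .univ) x =
      ∑ a : Finset (Fin k), (-1) ^ a.card * partialAverage b (fun z => g (a.piecewise 0 z)) x := by
    intro b
    simp only [partialAverage, alternatingCornerSum, Finset.powerset_univ]
    rw [integral_finsetSum _ fun a _ =>
      ((continuousOn_comp_piecewise_left b (hcorner a) hx).integrableOn_compact
        isCompact_Icc).const_mul _]
    simp_rw [integral_const_mul]
  have hvanish : ∀ a : Finset (Fin k), a ≠ ∅ → ∑ b : Finset (Fin k),
      (-1) ^ b.card * partialAverage b (fun z => g (a.piecewise 0 z)) x = 0 := by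
    intro a ha
    obtain ⟨i, hi⟩ := Finset.nonempty_iff_ne_empty.2 ha
    rw [← Finset.powerset_univ]
    refine sum_powerset_neg_one_pow_card_mul_eq_zero (Finset.mem_univ i) fun b _ =>
      partialAverage_insert_of_update_eq (fun z t => ?_) b x
    exact congrArg g (a.piecewise_congr (fun _ _ => rfl) fun j hj =>
      Function.update_of_ne (ne_of_mem_of_not_mem hi hj).symm t z)
  calc ∑ b : Finset (Fin k), (-1) ^ b.card * partialAverage b (alternatingCornerSum g .univ) x
      = ∑ a : Finset (Fin k), (-1) ^ a.card * ∑ b : Finset (Fin k),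
          (-1) ^ b.card * partialAverage b (fun z => g (a.piecewise 0 z)) x := by
        simp_rw [hexpand, Finset.mul_sum]
        rw [Finset.sum_comm]
        exact Finset.sum_congr rfl fun _ _ => Finset.sum_congr rfl fun _ _ => by ring
    _ = ∑ b : Finset (Fin k), (-1) ^ b.card * partialAverage b g x := by
        rw [Finset.sum_eq_single_of_mem ∅ (Finset.mem_univ _) fun a _ ha => by
          rw [hvanish a ha, mul_zero]]
        simp

end Average

/-- `D j` is the mixed partial of `g` in the first `j` coordinates (so `D k = g^{(1,…,1)}`),
`N g` is written as a cube integral against indicators, and `M_β` as integration over the unit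
cube in the coordinates with `β_i = 1`. -/
theorem identity_A4 (k : ℕ)
    (g : (Fin k → ℝ) → ℝ) (D : ℕ → (Fin k → ℝ) → ℝ) (hD0 : D 0 = g)
    (hderiv : ∀ j : Fin k, ∀ x ∈ Icc (0 : Fin k → ℝ) 1,
      HasDerivWithinAt (fun t => D (j : ℕ) (Function.update x j t))
        (D ((j : ℕ) + 1) x) (Icc 0 1) (x j))
    (hcont : ∀ j : ℕ, j ≤ k → ContinuousOn (D j) (Icc (0 : Fin k → ℝ) 1))
    (x : Fin k → ℝ) (hx : x ∈ Icc (0 : Fin k → ℝ) 1) :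
    g x =
      (∑ β : Fin k → Bool,
        (-1 : ℝ) ^ (Finset.univ.filter fun i => β i = true).card *
          ∫ u in Icc (0 : Fin k → ℝ) 1,
            (∫ w in Icc (0 : Fin k → ℝ) 1,
              (∏ i : Fin k,
                if w i ≤ (if β i then u i else x i) then (1:ℝ) else 0) * D k w))
      - ∑ β ∈ Finset.univ.filter (fun β : Fin k → Bool => β ≠ fun _ => false),
          (-1 : ℝ) ^ (Finset.univ.filter fun i => β i = true).card *
            ∫ u in Icc (0 : Fin k → ℝ) 1,
              g (fun i => if β i then u i else x i) := by
  have hg : ContinuousOn g (Icc 0 1) := hD0 ▸ hcont 0 k.zero_le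
  have hN : EqOn (cornerIntegral (D k) .univ) (alternatingCornerSum g .univ) (Icc 0 1) :=
    fun y hy => by simpa using cornerIntegral_eq_alternatingCornerSum hD0 hderiv hcont le_rfl hy
  have hfirst : ∑ β : Fin k → Bool, (-1 : ℝ) ^ (Finset.univ.filter fun i => β i = true).card *
      ∫ u in Icc (0 : Fin k → ℝ) 1, (∫ w in Icc (0 : Fin k → ℝ) 1,
        (∏ i : Fin k, if w i ≤ (if β i then u i else x i) then (1:ℝ) else 0) * D k w) =
      ∑ b : Finset (Fin k), (-1) ^ b.card * partialAverage b (cornerIntegral (D k) .univ) x := by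
    rw [← sum_boolFun_eq_sum_finset]
    simp [partialAverage, cornerIntegral, cornerIntegrand, piecewise_filter_eq_true]
  have hsecond : ∑ β ∈ Finset.univ.filter (fun β : Fin k → Bool => β ≠ fun _ => false),
      (-1 : ℝ) ^ (Finset.univ.filter fun i => β i = true).card *
        ∫ u in Icc (0 : Fin k → ℝ) 1, g (fun i => if β i then u i else x i) =
      ∑ b : Finset (Fin k), (-1) ^ b.card * partialAverage b g x - g x := by
    rw [Finset.filter_ne', Finset.sum_erase_eq_sub (Finset.mem_univ _),
      ← sum_boolFun_eq_sum_finset]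
    simp [partialAverage, piecewise_filter_eq_true, measureReal_def, Real.volume_Icc_pi]
  rw [hfirst, hsecond, Finset.sum_congr rfl fun b _ => by rw [partialAverage_congr hN hx],
    sum_partialAverage_alternatingCornerSum hg hx]
  ring
end

section
/- Let g : [0,1]² → ℝ be C². Then for every (x₁,x₂) ∈ [0,1]², g(x₁,x₂) = ∑_{α ∈ {0,1}²} ∫_{[0,1]²} χ_{α₁}(u₁,x₁) χ_{α₂}(u₂,x₂) g^α(u₁,u₂) du₁ du₂, where χ₀(u,x) = 1, χ₁(u,x) = u − 1 + 1_{u ≤ x}, and g^α denotes the mixed partial derivative of g in the coordinates j with α_j = 1. -/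
/-!
For `f ∈ C¹[0,1]` one has `f x = ∫₀¹ f + ∫₀¹ χ₁(u,x) f'(u) du`: integrating by parts,
`∫₀¹ (u - 1) f'(u) du = f 0 - ∫₀¹ f`, while `∫₀¹ 1_{u ≤ x} f'(u) du = f x - f 0`.
Applying this identity in `x₁`, and then under the `u₁`-integral in `x₂`, gives the
two-variable formula. Pulling the finite sum out of the `u₁`-integral only needs
`u₁ ↦ ∫₀¹ χ(u₂,x₂) g^α(u₁,u₂) du₂` to be continuous, which follows by dominated convergence
since `|χ| ≤ 1` on `[0,1]`.
-/

open MeasureTheory Set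

/-- The kernel `χ_j`: `χ₀(u,x) = 1` and `χ₁(u,x) = u - 1 + 1_{u ≤ x}`. -/
noncomputable def chiHY (j : Bool) (u x : ℝ) : ℝ :=
  if j then u - 1 + (if u ≤ x then 1 else 0) else 1

open scoped Interval

section BoundedKernel

variable {a b C : ℝ} {k : ℝ → ℝ}

theorem IntervalIntegrable.bdd_mul {φ : ℝ → ℝ} (hφ : IntervalIntegrable φ volume a b)
    (hk : Measurable k) (hkC : ∀ t ∈ Ι a b, |k t| ≤ C) :
    IntervalIntegrable (fun t => k t * φ t) volume a b := by
  rw [intervalIntegrable_iff] at hφ ⊢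
  exact hφ.bdd_mul hk.aestronglyMeasurable ((ae_restrict_iff' measurableSet_uIoc).2
    (ae_of_all _ hkC))

theorem continuousOn_intervalIntegral_bdd_mul {X : Type*} [TopologicalSpace X]
    [FirstCountableTopology X] {s : Set X} (hs : IsCompact s) (hk : Measurable k)
    (hkC : ∀ t ∈ Ι a b, |k t| ≤ C) {G : X → ℝ → ℝ}
    (hG : ContinuousOn (Function.uncurry G) (s ×ˢ [[a, b]])) :
    ContinuousOn (fun x => ∫ t in a..b, k t * G x t) s := by
  obtain ⟨M, hM⟩ := (hs.prod isCompact_uIcc).exists_bound_of_continuousOn hG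
  intro x₀ hx₀
  refine intervalIntegral.continuousWithinAt_of_dominated_interval (bound := fun _ => C * M)
    (eventually_nhdsWithin_of_forall fun x hx => ?_)
    (eventually_nhdsWithin_of_forall fun x hx => ae_of_all _ fun t ht => ?_)
    intervalIntegrable_const (ae_of_all _ fun t ht => ?_)
  · exact hk.aestronglyMeasurable.mul (((hG.uncurry_left x hx).aestronglyMeasurable
      measurableSet_uIcc).mono_measure (Measure.restrict_mono uIoc_subset_uIcc le_rfl))
  · rw [norm_mul, Real.norm_eq_abs]
    exact mul_le_mul (hkC t ht) (hM (x, t) ⟨hx, uIoc_subset_uIcc ht⟩) (norm_nonneg _)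
      ((abs_nonneg _).trans (hkC t ht))
  · exact continuousWithinAt_const.mul
      (hG.uncurry_right t (uIoc_subset_uIcc ht) x₀ hx₀)

end BoundedKernel

theorem chiHY_false (u x : ℝ) : chiHY false u x = 1 := rfl

theorem chiHY_true_mul (φ : ℝ → ℝ) (u x : ℝ) :
    chiHY true u x * φ u = (u - 1) * φ u + (Iic x).indicator φ u := by
  simp only [chiHY, if_true, indicator, mem_Iic]
  split_ifs <;> ring

theorem measurable_chiHY (j : Bool) (x : ℝ) : Measurable fun u => chiHY j u x := by
  cases j
  · exact measurable_const
  · exact (measurable_id.sub_const 1).add (Measurable.ite measurableSet_Iic measurable_const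
      measurable_const)

theorem abs_chiHY_le_one (j : Bool) {u : ℝ} (hu : u ∈ Icc (0:ℝ) 1) (x : ℝ) :
    |chiHY j u x| ≤ 1 := by
  obtain ⟨h0, h1⟩ := hu
  unfold chiHY
  split_ifs <;> simp only [abs_le] <;> constructor <;> linarith

theorem IntervalIntegrable.chiHY_mul {φ : ℝ → ℝ} (hφ : IntervalIntegrable φ volume 0 1)
    (j : Bool) (x : ℝ) : IntervalIntegrable (fun u => chiHY j u x * φ u) volume 0 1 :=
  hφ.bdd_mul (measurable_chiHY j x) fun _ hu =>
    abs_chiHY_le_one j (Ioc_subset_Icc_self (by simpa using hu)) x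

theorem continuousOn_integral_chiHY_mul {G : ℝ → ℝ → ℝ}
    (hG : ContinuousOn (Function.uncurry G) (Icc 0 1 ×ˢ Icc 0 1)) (j : Bool) (x : ℝ) :
    ContinuousOn (fun u₁ => ∫ u₂ in (0:ℝ)..1, chiHY j u₂ x * G u₁ u₂) (Icc 0 1) :=
  continuousOn_intervalIntegral_bdd_mul isCompact_Icc (measurable_chiHY j x)
    (fun _ hu => abs_chiHY_le_one j (Ioc_subset_Icc_self (by simpa using hu)) x)
    (by rwa [uIcc_of_le zero_le_one])

theorem integral_chiHY_true_mul {φ : ℝ → ℝ} (hφ : IntervalIntegrable φ volume 0 1)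
    {x : ℝ} (hx : x ∈ Icc (0:ℝ) 1) :
    ∫ u in (0:ℝ)..1, chiHY true u x * φ u
      = (∫ u in (0:ℝ)..1, (u - 1) * φ u) + ∫ u in (0:ℝ)..x, φ u := by
  have hlin : IntervalIntegrable (fun u => (u - 1) * φ u) volume 0 1 :=
    hφ.continuousOn_mul (by fun_prop)
  have hind : IntervalIntegrable ((Iic x).indicator φ) volume 0 1 :=
    ⟨hφ.1.indicator measurableSet_Iic, hφ.2.indicator measurableSet_Iic⟩
  simp_rw [chiHY_true_mul]
  rw [intervalIntegral.integral_add hlin hind]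
  exact congrArg _ (intervalIntegral.integral_indicator hx)

/-- The one-dimensional case, with `f false = f` and `f true = f'`. -/
theorem eq_sum_integral_chiHY_mul {f : Bool → ℝ → ℝ}
    (hderiv : ∀ t ∈ Icc (0:ℝ) 1, HasDerivWithinAt (f false) (f true t) (Icc 0 1) t)
    (hcont : ContinuousOn (f true) (Icc 0 1)) {x : ℝ} (hx : x ∈ Icc (0:ℝ) 1) :
    f false x = ∑ j : Bool, ∫ u in (0:ℝ)..1, chiHY j u x * f j u := by
  have hcont₀ : ContinuousOn (f false) (Icc 0 1) := fun t ht => (hderiv t ht).continuousWithinAt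
  have hint : ∀ j, IntervalIntegrable (f j) volume 0 1 := by
    rintro (_ | _) <;> apply ContinuousOn.intervalIntegrable <;>
      rwa [uIcc_of_le zero_le_one]
  have parts : ∫ u in (0:ℝ)..1, (u - 1) * f true u = f false 0 - ∫ u in (0:ℝ)..1, f false u := by
    rw [intervalIntegral.integral_mul_deriv_eq_deriv_mul_of_hasDerivWithinAt
      (u := fun t => t - 1) (u' := fun _ => 1) (fun t _ => (hasDerivWithinAt_id t _).sub_const 1)
      (by rwa [uIcc_of_le zero_le_one]) intervalIntegrable_const (hint true)]
    simp
  have ftc : ∫ u in (0:ℝ)..x, f true u = f false x - f false 0 := by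
    refine intervalIntegral.integral_eq_sub_of_hasDerivAt_of_le hx.1
      (hcont₀.mono (Icc_subset_Icc_right hx.2)) (fun t ht => ?_)
      ((hcont.mono ?_).intervalIntegrable)
    · exact (hderiv t ⟨ht.1.le, ht.2.le.trans hx.2⟩).hasDerivAt
        (Icc_mem_nhds ht.1 (ht.2.trans_le hx.2))
    · rw [uIcc_of_le hx.1]; exact Icc_subset_Icc_right hx.2
  simp only [Fintype.sum_bool, chiHY_false, one_mul, integral_chiHY_true_mul (hint true) hx,
    parts, ftc]
  ring

theorem integral_chiHY_mul_sum_integral {G : Bool → ℝ → ℝ → ℝ}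
    (hG : ∀ j, ContinuousOn (Function.uncurry (G j)) (Icc 0 1 ×ˢ Icc 0 1))
    (i : Bool) (x₁ x₂ : ℝ) :
    ∫ u₁ in (0:ℝ)..1, chiHY i u₁ x₁ * ∑ j : Bool, ∫ u₂ in (0:ℝ)..1, chiHY j u₂ x₂ * G j u₁ u₂
      = ∑ j : Bool, ∫ u₁ in (0:ℝ)..1, ∫ u₂ in (0:ℝ)..1,
          chiHY i u₁ x₁ * chiHY j u₂ x₂ * G j u₁ u₂ := by
  simp_rw [Finset.mul_sum]
  rw [intervalIntegral.integral_finsetSum fun j _ =>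
    ((continuousOn_integral_chiHY_mul (hG j) j x₂).intervalIntegrable_of_Icc
      zero_le_one).chiHY_mul i x₁]
  simp_rw [mul_assoc, intervalIntegral.integral_const_mul]

/-- Theorem 1 of Hall–Yatchew in dimension `k = 2`. The sum over
`α ∈ {0,1}²` is taken over `Bool × Bool`, with `gd α` denoting the mixed
partial derivative `g^α`. -/
theorem theorem1_dim_two (g g10 g01 g11 : ℝ → ℝ → ℝ)
    (h10 : ∀ x₁ ∈ Icc (0:ℝ) 1, ∀ x₂ ∈ Icc (0:ℝ) 1,
      HasDerivWithinAt (fun t => g t x₂) (g10 x₁ x₂) (Icc 0 1) x₁)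
    (h01 : ∀ x₁ ∈ Icc (0:ℝ) 1, ∀ x₂ ∈ Icc (0:ℝ) 1,
      HasDerivWithinAt (fun t => g x₁ t) (g01 x₁ x₂) (Icc 0 1) x₂)
    (h11 : ∀ x₁ ∈ Icc (0:ℝ) 1, ∀ x₂ ∈ Icc (0:ℝ) 1,
      HasDerivWithinAt (fun t => g10 x₁ t) (g11 x₁ x₂) (Icc 0 1) x₂)
    (hg : ContinuousOn (fun p : ℝ × ℝ => g p.1 p.2) (Icc 0 1 ×ˢ Icc 0 1))
    (hg10 : ContinuousOn (fun p : ℝ × ℝ => g10 p.1 p.2) (Icc 0 1 ×ˢ Icc 0 1))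
    (hg01 : ContinuousOn (fun p : ℝ × ℝ => g01 p.1 p.2) (Icc 0 1 ×ˢ Icc 0 1))
    (hg11 : ContinuousOn (fun p : ℝ × ℝ => g11 p.1 p.2) (Icc 0 1 ×ˢ Icc 0 1))
    (gd : Bool × Bool → ℝ → ℝ → ℝ)
    (hgd : gd (false, false) = g ∧ gd (true, false) = g10 ∧
      gd (false, true) = g01 ∧ gd (true, true) = g11) :
    ∀ x₁ ∈ Icc (0:ℝ) 1, ∀ x₂ ∈ Icc (0:ℝ) 1,
      g x₁ x₂ = ∑ α : Bool × Bool,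
        ∫ u₁ in (0:ℝ)..1, ∫ u₂ in (0:ℝ)..1,
          chiHY α.1 u₁ x₁ * chiHY α.2 u₂ x₂ * gd α u₁ u₂ := by
  obtain ⟨rfl, rfl, rfl, rfl⟩ := hgd
  intro x₁ hx₁ x₂ hx₂
  have hcont : ∀ α, ContinuousOn (Function.uncurry (gd α)) (Icc 0 1 ×ˢ Icc 0 1) := by
    rintro ⟨_ | _, _ | _⟩ <;> assumption
  have hderiv : ∀ i, ∀ u₁ ∈ Icc (0:ℝ) 1, ∀ t ∈ Icc (0:ℝ) 1,
      HasDerivWithinAt (gd (i, false) u₁) (gd (i, true) u₁ t) (Icc 0 1) t := by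
    rintro (_ | _) <;> assumption
  calc gd (false, false) x₁ x₂
      = ∑ i : Bool, ∫ u₁ in (0:ℝ)..1, chiHY i u₁ x₁ * gd (i, false) u₁ x₂ :=
        eq_sum_integral_chiHY_mul (f := fun i t => gd (i, false) t x₂)
          (fun t ht => h10 t ht x₂ hx₂) ((hcont _).uncurry_right x₂ hx₂) hx₁
    _ = ∑ i : Bool, ∫ u₁ in (0:ℝ)..1, chiHY i u₁ x₁ *
          ∑ j : Bool, ∫ u₂ in (0:ℝ)..1, chiHY j u₂ x₂ * gd (i, j) u₁ u₂ := by
        refine Finset.sum_congr rfl fun i _ => intervalIntegral.integral_congr fun u₁ hu₁ => ?_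
        rw [uIcc_of_le zero_le_one] at hu₁
        exact congrArg _ (eq_sum_integral_chiHY_mul (f := fun j => gd (i, j) u₁)
          (hderiv i u₁ hu₁) ((hcont _).uncurry_left u₁ hu₁) hx₂)
    _ = _ := by
        simp_rw [integral_chiHY_mul_sum_integral fun j => hcont _, Fintype.sum_prod_type]
end
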